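/- For any graph G with at least one edge and with fractional chromatic index c_f, cms(G) ≤ |E(G)|/c_f. -/

import Mathlib

open SimpleGraph

/-- Two edges are adjacent if they are distinct and share a vertex. -/
def EdgesAdj {V : Type*} (e e' : Sym2 V) : Prop :=
  e ≠ e' ∧ ∃ v : V, v ∈ e ∧ v ∈ e'

/-- `ms` of an ordering of a graph, the ordering being given as the list of edges
in increasing label order: the largest `s ∈ {1,…,m}` such that any ordered pair of
adjacent edges `(e,e')` with `ℓ(e) < ℓ(e')` has forward distance at least `s`. -/
noncomputable def msList {V : Type*} (L : List (Sym2 V)) : ℕ :=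
  sSup {s | 1 ≤ s ∧ s ≤ L.length ∧ ∀ i j e e', i < j →
    L[i]? = some e → L[j]? = some e' → EdgesAdj e e' → s ≤ j - i}

/-- `cms` of an ordering of a graph: the largest `s ∈ {1,…,m}` such that every pair of
adjacent edges is at cyclic distance at least `s`. -/
noncomputable def cmsList {V : Type*} (L : List (Sym2 V)) : ℕ :=
  sSup {s | 1 ≤ s ∧ s ≤ L.length ∧ ∀ i j e e', i < j →
    L[i]? = some e → L[j]? = some e' → EdgesAdj e e' →
    s ≤ min (j - i) (L.length - (j - i))}

/-- `L` is an ordering of `G`: it lists every edge of `G` exactly once. -/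
def IsOrdering {V : Type*} (G : SimpleGraph V) (L : List (Sym2 V)) : Prop :=
  L.Nodup ∧ ∀ e, e ∈ L ↔ e ∈ G.edgeSet

/-- Cyclic matching sequenceability of a graph: the maximum of `cmsList` over orderings. -/
noncomputable def cms {V : Type*} (G : SimpleGraph V) : ℕ :=
  sSup {k | ∃ L, IsOrdering G L ∧ cmsList L = k}

/-- Number of edges of a graph. -/
noncomputable def numEdges {V : Type*} (G : SimpleGraph V) : ℕ :=
  Nat.card G.edgeSet

/-- The chromatic index: the least number of colours in a proper edge colouring. -/
noncomputable def chromaticIndex {V : Type*} (G : SimpleGraph V) : ℕ :=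
  sInf {c | ∃ f : G.edgeSet → Fin c, ∀ e e' : G.edgeSet, EdgesAdj e.1 e'.1 → f e ≠ f e'}

/-- The edge set of `G` forms a matching (no two distinct edges share a vertex). -/
def IsMatchingGraph {V : Type*} (G : SimpleGraph V) : Prop :=
  ∀ e ∈ G.edgeSet, ∀ e' ∈ G.edgeSet, ¬ EdgesAdj e e'

/-- `G` is regular of degree `d`. -/
def IsRegularGraph {V : Type*} (G : SimpleGraph V) (d : ℕ) : Prop :=
  ∀ v : V, Nat.card (G.neighborSet v) = d

/-- A finite set of edges of `G` forming a matching. -/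
def IsMatchingSet {V : Type*} (G : SimpleGraph V) (M : Finset (Sym2 V)) : Prop :=
  ↑M ⊆ G.edgeSet ∧ ∀ e ∈ M, ∀ e' ∈ M, ¬ EdgesAdj e e'

/-- The matching number of a graph. -/
noncomputable def matchingNumber {V : Type*} (G : SimpleGraph V) : ℕ :=
  sSup {k | ∃ M : Finset (Sym2 V), IsMatchingSet G M ∧ M.card = k}
/-- A fractional edge colouring of `G`, given as a nonnegative weight function on finite
edge sets which vanishes outside the matchings of `G`, such that for every edge `e` of `G`
the total weight of the matchings containing `e` is at least `1`. -/
def IsFracEdgeColouring {V : Type*} [Fintype V] [DecidableEq V] (G : SimpleGraph V)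
    (w : Finset (Sym2 V) → ℝ) : Prop :=
  (∀ M, 0 ≤ w M) ∧ (∀ M, ¬ IsMatchingSet G M → w M = 0) ∧
  ∀ e ∈ G.edgeSet, 1 ≤ ∑ M ∈ Finset.univ.filter (fun M : Finset (Sym2 V) => e ∈ M), w M

/-- The fractional chromatic index: the infimum of the weights of fractional edge
colourings. -/
noncomputable def fracChromaticIndex {V : Type*} [Fintype V] [DecidableEq V]
    (G : SimpleGraph V) : ℝ :=
  sInf {x | ∃ w : Finset (Sym2 V) → ℝ,
    IsFracEdgeColouring G w ∧ ∑ M : Finset (Sym2 V), w M = x}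

/-!
Take an ordering `L` of the `m` edges with `cms L = s = cms G`. Any two edges among `s`
cyclically consecutive entries of `L` are at cyclic distance less than `s`, so they are not
adjacent: each of the `m` cyclic windows of length `s` is a matching. Every edge lies in `s` of
these windows, so giving each window weight `1 / s` is a fractional edge colouring of weight
`m / s`. Hence `c_f ≤ m / s`, that is `s ≤ m / c_f`.
-/

open Finset

theorem EdgesAdj.symm {V : Type*} {e e' : Sym2 V} (h : EdgesAdj e e') : EdgesAdj e' e :=
  ⟨h.1.symm, h.2.imp fun _ hv => ⟨hv.2, hv.1⟩⟩

def AdjSeparated {V : Type*} (L : List (Sym2 V)) (s : ℕ) : Prop :=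
  ∀ i j e e', i < j → L[i]? = some e → L[j]? = some e' → EdgesAdj e e' →
    s ≤ min (j - i) (L.length - (j - i))

section Ordering

variable {V : Type*} {G : SimpleGraph V} {L : List (Sym2 V)}

theorem cmsList_eq_sSup :
    cmsList L = sSup {s | 1 ≤ s ∧ s ≤ L.length ∧ AdjSeparated L s} := rfl

theorem cmsList_le_length (L : List (Sym2 V)) : cmsList L ≤ L.length := by
  rw [cmsList_eq_sSup]
  rcases Set.eq_empty_or_nonempty {s | 1 ≤ s ∧ s ≤ L.length ∧ AdjSeparated L s} with h | h
  · simp [h]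
  · exact csSup_le h fun _ hs => hs.2.1

theorem adjSeparated_cmsList (h : 0 < cmsList L) : AdjSeparated L (cmsList L) := by
  rw [cmsList_eq_sSup] at h ⊢
  have hne : {s | 1 ≤ s ∧ s ≤ L.length ∧ AdjSeparated L s}.Nonempty := by
    by_contra hempty
    simp [Set.not_nonempty_iff_eq_empty.1 hempty] at h
  exact (Nat.sSup_mem hne ⟨L.length, fun _ hs => hs.2.1⟩).2.2

theorem IsOrdering.length_eq (hL : IsOrdering G L) : L.length = numEdges G := by
  classical
  have hset : G.edgeSet = (L.toFinset : Set (Sym2 V)) := by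
    ext e; simp [hL.2 e]
  rw [numEdges, hset, Nat.card_coe_set_eq, Set.ncard_coe_finset,
    List.toFinset_card_of_nodup hL.1]

theorem exists_isOrdering (h : G.edgeSet.Finite) : ∃ L, IsOrdering G L :=
  ⟨h.toFinset.toList, nodup_toList _, fun e => by simp⟩

theorem exists_isOrdering_cmsList_eq_cms (h : G.edgeSet.Finite) :
    ∃ L, IsOrdering G L ∧ cmsList L = cms G := by
  obtain ⟨L₀, hL₀⟩ := exists_isOrdering h
  have hbdd : BddAbove {k | ∃ L, IsOrdering G L ∧ cmsList L = k} := by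
    refine ⟨numEdges G, ?_⟩
    rintro _ ⟨L, hL, rfl⟩
    exact hL.length_eq ▸ cmsList_le_length L
  exact Nat.sSup_mem (s := {k | ∃ L, IsOrdering G L ∧ cmsList L = k}) ⟨_, L₀, hL₀, rfl⟩ hbdd

end Ordering

theorem Nat.mod_eq_of_lt_two_mul {x m : ℕ} (h : x < 2 * m) :
    x < m ∧ x % m = x ∨ m ≤ x ∧ x % m = x - m := by
  rcases lt_or_ge x m with hx | hx
  · exact .inl ⟨hx, Nat.mod_eq_of_lt hx⟩
  · exact .inr ⟨hx, by rw [Nat.mod_eq_sub_mod hx, Nat.mod_eq_of_lt (by omega)]⟩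

section Window

variable {α : Type*} [DecidableEq α]

def cyclicWindow (L : List α) (s : ℕ) (i : Fin L.length) : Finset α :=
  (range s).image fun t => L[(i + t) % L.length]'(Nat.mod_lt _ i.pos)

variable {L : List α} {s : ℕ}

theorem mem_cyclicWindow {i : Fin L.length} {e : α} :
    e ∈ cyclicWindow L s i ↔ ∃ t < s, L[(i + t) % L.length]'(Nat.mod_lt _ i.pos) = e := by
  simp [cyclicWindow]

theorem mem_of_mem_cyclicWindow {i : Fin L.length} {e : α} (he : e ∈ cyclicWindow L s i) :
    e ∈ L := by
  obtain ⟨t, -, rfl⟩ := mem_cyclicWindow.1 he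
  exact List.getElem_mem _

theorem le_card_filter_getElem_mem_cyclicWindow (hs : s ≤ L.length) (j : Fin L.length) :
    s ≤ #{i | L[j] ∈ cyclicWindow L s i} := by
  have hj := j.isLt
  -- the entry at position `j` is the `t`-th entry of the window starting at `j - t`
  let start (t : ℕ) : Fin L.length := ⟨(j + L.length - t) % L.length, Nat.mod_lt _ j.pos⟩
  have hstart (t : ℕ) (ht : t < s) :
      (start t : ℕ) + t = j + L.length ∨ (start t : ℕ) + t = j := by
    show (j + L.length - t) % L.length + t = _ ∨ (j + L.length - t) % L.length + t = _
    rcases Nat.mod_eq_of_lt_two_mul (x := j + L.length - t) (m := L.length)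
      (by omega) with ⟨hlt, h⟩ | ⟨hge, h⟩ <;> rw [h] <;> omega
  calc s = #(range s) := (card_range s).symm
    _ ≤ _ := by
      refine card_le_card_of_injOn start (fun t ht => ?_) (fun t ht t' ht' heq => ?_)
      · simp only [coe_range, Set.mem_Iio] at ht
        simp only [coe_filter, mem_univ, true_and, mem_cyclicWindow]
        refine ⟨t, ht, ?_⟩
        have hidx : ((start t : ℕ) + t) % L.length = j := by
          rcases hstart t ht with h | h <;> rw [h]
          · rw [Nat.add_mod_right, Nat.mod_eq_of_lt hj]
          · exact Nat.mod_eq_of_lt hj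
        simp only [hidx]
        rfl
      · simp only [coe_range, Set.mem_Iio] at ht ht'
        have := congrArg Fin.val heq
        rcases hstart t ht with h | h <;> rcases hstart t' ht' with h' | h' <;> omega

end Window

theorem AdjSeparated.not_edgesAdj {V : Type*} {L : List (Sym2 V)} {s a b : ℕ}
    (hsep : AdjSeparated L s) (hab : a < b) (hb : b < L.length)
    (hdist : min (b - a) (L.length - (b - a)) < s) : ¬ EdgesAdj L[a] L[b] := fun hadj =>
  (hsep a b _ _ hab (List.getElem?_eq_getElem _) (List.getElem?_eq_getElem hb) hadj).not_gt hdist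

theorem AdjSeparated.not_edgesAdj_of_mem_cyclicWindow {V : Type*} [DecidableEq V]
    {L : List (Sym2 V)} {s : ℕ} (hsep : AdjSeparated L s) (hs : s ≤ L.length)
    {i : Fin L.length} {e e' : Sym2 V} (he : e ∈ cyclicWindow L s i)
    (he' : e' ∈ cyclicWindow L s i) : ¬ EdgesAdj e e' := by
  obtain ⟨t, ht, rfl⟩ := mem_cyclicWindow.1 he
  obtain ⟨t', ht', rfl⟩ := mem_cyclicWindow.1 he'
  have hi := i.isLt
  have ha := Nat.mod_eq_of_lt_two_mul (x := i + t) (m := L.length) (by omega)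
  have hb := Nat.mod_eq_of_lt_two_mul (x := i + t') (m := L.length) (by omega)
  rcases lt_trichotomy ((i + t) % L.length) ((i + t') % L.length) with hlt | heq | hgt
  · exact hsep.not_edgesAdj hlt _ (by omega)
  · simp only [heq]
    exact fun h => h.1 rfl
  · exact fun h => hsep.not_edgesAdj hgt _ (by omega) h.symm

section Fractional

variable {V : Type*} [Fintype V] [DecidableEq V] {G : SimpleGraph V}
  {w : Finset (Sym2 V) → ℝ}

theorem IsFracEdgeColouring.one_le_sum (hw : IsFracEdgeColouring G w) {e : Sym2 V}
    (he : e ∈ G.edgeSet) : 1 ≤ ∑ M, w M :=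
  (hw.2.2 e he).trans <|
    sum_le_sum_of_subset_of_nonneg (filter_subset _ _) fun M _ _ => hw.1 M

theorem fracChromaticIndex_nonneg (G : SimpleGraph V) : 0 ≤ fracChromaticIndex G :=
  Real.sInf_nonneg <| by
    rintro _ ⟨w, hw, rfl⟩
    exact sum_nonneg fun M _ => hw.1 M

theorem IsFracEdgeColouring.fracChromaticIndex_le (hw : IsFracEdgeColouring G w) :
    fracChromaticIndex G ≤ ∑ M, w M := by
  refine csInf_le ⟨0, ?_⟩ ⟨w, hw, rfl⟩
  rintro _ ⟨w', hw', rfl⟩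
  exact sum_nonneg fun M _ => hw'.1 M

theorem IsFracEdgeColouring.one_le_fracChromaticIndex (hw : IsFracEdgeColouring G w)
    (hG : G.edgeSet.Nonempty) : 1 ≤ fracChromaticIndex G := by
  obtain ⟨e, he⟩ := hG
  refine le_csInf ⟨_, w, hw, rfl⟩ ?_
  rintro _ ⟨w', hw', rfl⟩
  exact hw'.one_le_sum he

/-- Each `M i` gets weight `1 / k`. -/
theorem exists_isFracEdgeColouring_of_cover {ι : Type*} (I : Finset ι)
    (M : ι → Finset (Sym2 V)) (hM : ∀ i ∈ I, IsMatchingSet G (M i)) {k : ℕ} (hk : 0 < k)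
    (hcover : ∀ e ∈ G.edgeSet, k ≤ #{i ∈ I | e ∈ M i}) :
    ∃ w, IsFracEdgeColouring G w ∧ ∑ N, w N = #I / k := by
  refine ⟨fun N => #{i ∈ I | M i = N} / k, ⟨fun N => by positivity, fun N hN => ?_, ?_⟩, ?_⟩
  · dsimp only
    rw [filter_false_of_mem fun i hi (hiN : M i = N) => hN (hiN ▸ hM i hi)]
    simp
  · intro e he
    dsimp only
    have hfib : #{i ∈ I | e ∈ M i} = ∑ N with e ∈ N, #{i ∈ I | M i = N} := by
      rw [card_eq_sum_card_fiberwise (f := M) (t := {N | e ∈ N})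
        fun i hi => by simpa using (mem_filter.1 hi).2]
      refine sum_congr rfl fun N hN => ?_
      rw [filter_filter]
      refine congrArg _ (filter_congr fun i _ => ?_)
      simp only [mem_filter, mem_univ, true_and] at hN
      exact ⟨And.right, fun h => ⟨h ▸ hN, h⟩⟩
    rw [← sum_div, ← Nat.cast_sum, ← hfib, le_div_iff₀ (by positivity), one_mul]
    exact_mod_cast hcover e he
  · rw [← sum_div, ← Nat.cast_sum,
      ← card_eq_sum_card_fiberwise fun i _ => mem_coe.2 (mem_univ (M i))]

end Fractional

section Windows

variable {V : Type*} [DecidableEq V] {G : SimpleGraph V} {L : List (Sym2 V)} {s : ℕ}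

theorem IsOrdering.isMatchingSet_cyclicWindow (hL : IsOrdering G L) (hsep : AdjSeparated L s)
    (hs : s ≤ L.length) (i : Fin L.length) : IsMatchingSet G (cyclicWindow L s i) :=
  ⟨fun _ he => (hL.2 _).1 (mem_of_mem_cyclicWindow he),
    fun _ he _ he' => hsep.not_edgesAdj_of_mem_cyclicWindow hs he he'⟩

theorem IsOrdering.le_card_filter_mem_cyclicWindow (hL : IsOrdering G L) (hs : s ≤ L.length)
    {e : Sym2 V} (he : e ∈ G.edgeSet) : s ≤ #{i | e ∈ cyclicWindow L s i} := by
  obtain ⟨j, hj, rfl⟩ := List.mem_iff_getElem.1 ((hL.2 e).2 he)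
  exact le_card_filter_getElem_mem_cyclicWindow hs ⟨j, hj⟩

theorem IsOrdering.exists_isFracEdgeColouring_sum_eq [Fintype V] (hL : IsOrdering G L)
    (hpos : 0 < cmsList L) :
    ∃ w, IsFracEdgeColouring G w ∧ ∑ N, w N = numEdges G / cmsList L := by
  have hs := cmsList_le_length L
  have hM (i : Fin L.length) := hL.isMatchingSet_cyclicWindow (adjSeparated_cmsList hpos) hs i
  simpa only [card_univ, Fintype.card_fin, hL.length_eq] using
    exists_isFracEdgeColouring_of_cover univ _ (fun i _ => hM i) hpos
      fun e he => hL.le_card_filter_mem_cyclicWindow hs he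

end Windows

theorem cms_le_div_fracChromaticIndex_general {V : Type*} [Fintype V] [DecidableEq V]
    (G : SimpleGraph V) :
    (cms G : ℝ) ≤ (numEdges G : ℝ) / fracChromaticIndex G := by
  obtain ⟨L, hL, hcms⟩ := exists_isOrdering_cmsList_eq_cms G.edgeSet.toFinite
  rcases (cms G).eq_zero_or_pos with hzero | hpos
  · rw [hzero, Nat.cast_zero]
    exact div_nonneg (Nat.cast_nonneg _) (fracChromaticIndex_nonneg G)
  rw [← hcms] at hpos ⊢
  obtain ⟨w, hw, hsum⟩ := hL.exists_isFracEdgeColouring_sum_eq hpos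
  have hlen : 0 < L.length := hpos.trans_le (cmsList_le_length L)
  have hone : 1 ≤ fracChromaticIndex G :=
    hw.one_le_fracChromaticIndex ⟨L[0], (hL.2 _).1 (List.getElem_mem hlen)⟩
  have hs : (0 : ℝ) < cmsList L := Nat.cast_pos.2 hpos
  rw [le_div_iff₀ (by linarith), ← le_div_iff₀' hs]
  exact hsum ▸ hw.fracChromaticIndex_le

/-- For any graph `G` with at least one edge and fractional chromatic index `c_f`,
`cms(G) ≤ |E(G)|/c_f`. -/
theorem cms_le_div_fracChromaticIndex {V : Type*} [Fintype V] [DecidableEq V]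
    (G : SimpleGraph V) (hne : G.edgeSet.Nonempty) :
    (cms G : ℝ) ≤ (numEdges G : ℝ) / fracChromaticIndex G :=
  cms_le_div_fracChromaticIndex_general G
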